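/- arXiv:2202.06433 — 2 statements merged into one kernel-verified Lean document; each statement's English description precedes it below -/
import Mathlib

section
/- Let T be a cyclic analytic left invertible bounded linear operator on a nonzero complex Hilbert space H, let f ∈ H and let g ∈ ker T*. Then σ_l(T) ⊆ σ_l(T + f⊗g), σ_l(T + f⊗g) \ {⟨f,g⟩} = σ_l(T) \ {⟨f,g⟩}, and the spectral radius satisfies r(T + f⊗g) = max{r(T), |⟨f,g⟩|}. -/
open scoped InnerProductSpace

/-- The rank one operator `f ⊗ g` given by `(f ⊗ g) h = ⟨h, g⟩ f`, where the inner
product is linear in the first argument (i.e. `⟪g, h⟫_ℂ • f` in Mathlib's convention). -/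
noncomputable def rankOne {H : Type*} [NormedAddCommGroup H] [InnerProductSpace ℂ H]
    (f g : H) : H →L[ℂ] H := (innerSL ℂ g).smulRight f

/-- The left spectrum of a bounded operator. -/
def leftSpectrum {H : Type*} [NormedAddCommGroup H] [InnerProductSpace ℂ H]
    (T : H →L[ℂ] H) : Set ℂ :=
  {l : ℂ | ¬ ∃ L : H →L[ℂ] H, L ∘L (T - l • (1 : H →L[ℂ] H)) = 1}

/-- The point spectrum (set of eigenvalues) of a bounded operator. -/
def pointSpectrum {H : Type*} [NormedAddCommGroup H] [InnerProductSpace ℂ H]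
    (T : H →L[ℂ] H) : Set ℂ :=
  {l : ℂ | ∃ h : H, h ≠ 0 ∧ T h = l • h}

/-!
Put `F = rankOne f g` and `α = ⟪g, f⟫`. Since `T† g = 0` we have `F T = 0` and `F F = α F`, and
`⟪g, (S - l) x⟫ = (μ - l) ⟪g, x⟫` for `S = T, μ = 0` and for `S = T + F, μ = α`. For `l ≠ μ` this
bounds `|⟪g, x⟫|` by `‖(S - l) x‖`, so `S - l` is bounded below as soon as `S ± F - l` is; in a
Hilbert space, bounded below is the same as left invertible. The point `l = 0` for `T` is covered by
the left invertibility of `T`.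

For the spectral radius only the two algebraic identities matter: for `l ≠ 0`,
`l - (T + F) = (1 - l⁻¹ F)(l - T)`, and `1 - l⁻¹ F` is invertible unless `l = α`. Hence the spectra
of `T` and `T + F` agree off `{0, α}`, while `α` lies in the spectrum of `T + F` whenever `F ≠ 0`,
because `F (α - (T + F)) = 0`.
-/

open scoped NNReal
open ContinuousLinearMap

section Spectrum

variable {𝕜 A : Type*} [NormedField 𝕜] [Ring A] [Algebra 𝕜 A] {t p : A} {α : 𝕜}

theorem nnnorm_le_spectralRadius_of_mem {a : A} {k : 𝕜} (hk : k ∈ spectrum 𝕜 a) :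
    (‖k‖₊ : ENNReal) ≤ spectralRadius 𝕜 a :=
  le_iSup₂ (α := ENNReal) k hk

theorem isUnit_one_sub_smul_of_mul_self_eq_smul (hpp : p * p = α • p) {c : 𝕜}
    (hc : c * α ≠ 1) : IsUnit (1 - c • p) := by
  have hc' : 1 - c * α ≠ 0 := sub_ne_zero.mpr hc.symm
  set d := c / (1 - c * α)
  have hd : d - c - c * d * α = 0 := by
    simp only [d]; field_simp; ring
  refine ⟨⟨1 - c • p, 1 + d • p, ?_, ?_⟩, rfl⟩
  · calc (1 - c • p) * (1 + d • p) = 1 + (d - c - c * d * α) • p := by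
          simp only [mul_add, sub_mul, one_mul, mul_one, smul_mul_smul_comm, hpp, smul_smul,
            sub_smul]
          abel
      _ = 1 := by rw [hd, zero_smul, add_zero]
  · calc (1 + d • p) * (1 - c • p) = 1 + (d - c - c * d * α) • p := by
          simp only [mul_sub, add_mul, one_mul, mul_one, smul_mul_smul_comm, hpp, smul_smul,
            sub_smul]
          rw [mul_comm d c]
          abel
      _ = 1 := by rw [hd, zero_smul, add_zero]

theorem algebraMap_sub_add_eq_mul (hpt : p * t = 0) {l : 𝕜} (hl : l ≠ 0) :
    algebraMap 𝕜 A l - (t + p) = (1 - l⁻¹ • p) * (algebraMap 𝕜 A l - t) := by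
  rw [sub_mul, one_mul, mul_sub, smul_mul_assoc, smul_mul_assoc, hpt, smul_zero, sub_zero,
    Algebra.algebraMap_eq_smul_one, mul_smul_comm, mul_one, smul_smul, inv_mul_cancel₀ hl,
    one_smul]
  abel

theorem mem_spectrum_add_of_ne_zero (hpt : p * t = 0) (hpp : p * p = α • p) (hp : p ≠ 0) :
    α ∈ spectrum 𝕜 (t + p) := by
  have hker : p * (algebraMap 𝕜 A α - (t + p)) = 0 := by
    rw [mul_sub, mul_add, hpt, hpp, Algebra.algebraMap_eq_smul_one, mul_smul_comm, mul_one,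
      zero_add, sub_self]
  intro hunit
  exact hp (hunit.mul_left_eq_zero.mp hker)

theorem spectrum_add_subset (hpt : p * t = 0) (hpp : p * p = α • p) :
    spectrum 𝕜 (t + p) ⊆ insert 0 (insert α (spectrum 𝕜 t)) := by
  intro l hl
  by_contra! hnot
  simp only [Set.mem_insert_iff, not_or] at hnot
  obtain ⟨hl0, hlα, hlt⟩ := hnot
  rw [spectrum.mem_iff, algebraMap_sub_add_eq_mul hpt hl0] at hl
  rw [spectrum.notMem_iff] at hlt
  refine hl ((isUnit_one_sub_smul_of_mul_self_eq_smul hpp ?_).mul hlt)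
  rwa [ne_eq, inv_mul_eq_one₀ hl0]

theorem spectrum_subset_add (hpt : p * t = 0) (hpp : p * p = α • p) :
    spectrum 𝕜 t ⊆ insert 0 (spectrum 𝕜 (t + p)) := by
  intro l hl
  by_contra! hnot
  simp only [Set.mem_insert_iff, not_or] at hnot
  obtain ⟨hl0, hla⟩ := hnot
  have hunit : IsUnit (1 - l⁻¹ • p) := by
    by_cases hlα : l = α
    · subst hlα
      have hp : p = 0 := by_contra fun hp => hla (mem_spectrum_add_of_ne_zero hpt hpp hp)
      simp [hp]
    · refine isUnit_one_sub_smul_of_mul_self_eq_smul hpp ?_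
      rwa [ne_eq, inv_mul_eq_one₀ hl0]
  rw [spectrum.notMem_iff, algebraMap_sub_add_eq_mul hpt hl0] at hla
  exact spectrum.mem_iff.mp hl ((Units.isUnit_units_mul hunit.unit _).mp hla)

theorem spectralRadius_add_eq_max (hpt : p * t = 0) (hpp : p * p = α • p)
    (hα : p = 0 → α = 0) :
    spectralRadius 𝕜 (t + p) = max (spectralRadius 𝕜 t) ‖α‖₊ := by
  apply le_antisymm
  · refine iSup₂_le fun l hl => ?_
    rcases spectrum_add_subset hpt hpp hl with rfl | rfl | hl
    · simp
    · exact le_max_right _ _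
    · exact (nnnorm_le_spectralRadius_of_mem hl).trans (le_max_left _ _)
  · refine max_le (iSup₂_le fun l hl => ?_) ?_
    · rcases spectrum_subset_add hpt hpp hl with rfl | hl
      · simp
      · exact nnnorm_le_spectralRadius_of_mem hl
    · by_cases hp : p = 0
      · simp [hα hp]
      · exact nnnorm_le_spectralRadius_of_mem (mem_spectrum_add_of_ne_zero hpt hpp hp)

end Spectrum

namespace ContinuousLinearMap.HasLeftInverse

variable {𝕜 E F : Type*} [RCLike 𝕜] [NormedAddCommGroup E] [NormedSpace 𝕜 E]
  [NormedAddCommGroup F] [InnerProductSpace 𝕜 F]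

theorem exists_bound {S : E →L[𝕜] F} (hS : S.HasLeftInverse) :
    ∃ K : ℝ≥0, ∀ x, ‖x‖ ≤ K * ‖S x‖ := by
  obtain ⟨L, hL⟩ := hS
  refine ⟨‖L‖₊, fun x => ?_⟩
  simpa only [hL x, coe_nnnorm] using L.le_opNorm (S x)

theorem of_bound [CompleteSpace E] [CompleteSpace F] {S : E →L[𝕜] F} {K : ℝ≥0}
    (h : ∀ x, ‖x‖ ≤ K * ‖S x‖) : S.HasLeftInverse := by
  have hS := S.antilipschitz_of_bound h
  have hclosed : IsClosed (Set.range S) := hS.isClosed_range S.uniformContinuous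
  have : CompleteSpace S.range :=
    (show IsClosed (S.range : Set F) by rwa [LinearMap.coe_range, coe_coe]).completeSpace_coe
  exact of_injective_of_isClosed_range_of_closedComplement_range hS.injective hclosed
    ⟨S.range.orthogonalProjectionOnto, S.range.orthogonalProjectionOnto_mem_subspace_eq_self⟩

end ContinuousLinearMap.HasLeftInverse

section RankOne

variable {H : Type*} [NormedAddCommGroup H] [InnerProductSpace ℂ H]

theorem rankOne_apply (f g x : H) : rankOne f g x = ⟪g, x⟫_ℂ • f := rfl

theorem rankOne_zero_right (f : H) : rankOne f (0 : H) = 0 := by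
  ext x; simp [rankOne_apply]

theorem rankOne_neg_left (f g : H) : rankOne (-f) g = -rankOne f g := by
  ext x; simp [rankOne_apply]

theorem rankOne_mul_self (f g : H) : rankOne f g * rankOne f g = ⟪g, f⟫_ℂ • rankOne f g := by
  ext x
  simp only [mul_apply_eq_comp, smul_apply, rankOne_apply, map_smul, smul_smul, mul_comm]

theorem inner_eq_zero_of_rankOne_eq_zero {f g : H} (h : rankOne f g = 0) : ⟪g, f⟫_ℂ = 0 := by
  have hg := congrArg (fun S => S g) h
  simp only [rankOne_apply, zero_apply, smul_eq_zero, inner_self_eq_zero] at hg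
  rcases hg with rfl | rfl <;> simp

theorem rankOne_mul [CompleteSpace H] (f g : H) (T : H →L[ℂ] H) :
    rankOne f g * T = rankOne f (ContinuousLinearMap.adjoint T g) := by
  ext x
  simp only [mul_apply_eq_comp, rankOne_apply, ContinuousLinearMap.adjoint_inner_left]

theorem norm_add_rankOne_apply_le {B : H →L[ℂ] H} {f g : H} {μ : ℂ} (hμ : μ ≠ 0)
    (hB : ∀ x, ⟪g, B x⟫_ℂ = μ * ⟪g, x⟫_ℂ) (x : H) :
    ‖(B + rankOne f g) x‖ ≤ (1 + ‖f‖ * ‖g‖ / ‖μ‖) * ‖B x‖ := by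
  have hμ' : 0 < ‖μ‖ := norm_pos_iff.mpr hμ
  have hinner : ‖⟪g, x⟫_ℂ‖ ≤ ‖g‖ * ‖B x‖ / ‖μ‖ := by
    rw [le_div_iff₀ hμ', mul_comm, ← norm_mul, ← hB]
    exact norm_inner_le_norm _ _
  calc ‖(B + rankOne f g) x‖ ≤ ‖B x‖ + ‖⟪g, x⟫_ℂ‖ * ‖f‖ := by
        rw [add_apply, rankOne_apply, ← norm_smul]
        exact norm_add_le _ _
    _ ≤ ‖B x‖ + ‖g‖ * ‖B x‖ / ‖μ‖ * ‖f‖ := by gcongr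
    _ = (1 + ‖f‖ * ‖g‖ / ‖μ‖) * ‖B x‖ := by ring

theorem hasLeftInverse_of_add_rankOne [CompleteSpace H] {B : H →L[ℂ] H} {f g : H} {μ : ℂ}
    (hμ : μ ≠ 0) (hB : ∀ x, ⟪g, B x⟫_ℂ = μ * ⟪g, x⟫_ℂ) (h : (B + rankOne f g).HasLeftInverse) :
    B.HasLeftInverse := by
  obtain ⟨K, hK⟩ := h.exists_bound
  refine ContinuousLinearMap.HasLeftInverse.of_bound (K := K * (1 + ‖f‖₊ * ‖g‖₊ / ‖μ‖₊))
    fun x => ?_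
  calc ‖x‖ ≤ K * ‖(B + rankOne f g) x‖ := hK x
    _ ≤ K * ((1 + ‖f‖ * ‖g‖ / ‖μ‖) * ‖B x‖) := by
        gcongr; exact norm_add_rankOne_apply_le hμ hB x
    _ = _ := by push_cast; ring

end RankOne

section LeftSpectrum

variable {H : Type*} [NormedAddCommGroup H] [InnerProductSpace ℂ H]

theorem notMem_leftSpectrum_iff {T : H →L[ℂ] H} {l : ℂ} :
    l ∉ leftSpectrum T ↔ (T - l • 1).HasLeftInverse := by
  simp [leftSpectrum, ContinuousLinearMap.HasLeftInverse, Function.LeftInverse,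
    ContinuousLinearMap.ext_iff]

theorem mem_leftSpectrum_add_rankOne [CompleteSpace H] {S : H →L[ℂ] H} {g : H} {μ l : ℂ}
    (hS : ∀ x, ⟪g, S x⟫_ℂ = μ * ⟪g, x⟫_ℂ) (hl : l ≠ μ) (f : H) (h : l ∈ leftSpectrum S) :
    l ∈ leftSpectrum (S + rankOne f g) := by
  contrapose h
  rw [notMem_leftSpectrum_iff] at h ⊢
  refine hasLeftInverse_of_add_rankOne (f := f) (g := g) (sub_ne_zero.mpr hl.symm) (fun x => ?_) ?_
  · simp only [sub_apply, smul_apply, one_apply_eq_self, inner_sub_right, inner_smul_right, hS]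
    ring
  · rwa [sub_add_eq_add_sub]

end LeftSpectrum

theorem left_spectrum_rankOne_perturbation_general
    {H : Type*} [NormedAddCommGroup H] [InnerProductSpace ℂ H] [CompleteSpace H]
    (T : H →L[ℂ] H)
    (hlinv : ∃ L : H →L[ℂ] H, L ∘L T = 1)
    (f g : H) (hg : g ∈ LinearMap.ker (ContinuousLinearMap.adjoint T : H →ₗ[ℂ] H)) :
    leftSpectrum T ⊆ leftSpectrum (T + rankOne f g) ∧
    leftSpectrum (T + rankOne f g) \ {⟪g, f⟫_ℂ} = leftSpectrum T \ {⟪g, f⟫_ℂ} ∧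
    spectralRadius ℂ (T + rankOne f g) =
      max (spectralRadius ℂ T) (‖⟪g, f⟫_ℂ‖₊ : ENNReal) := by
  have hg' : ContinuousLinearMap.adjoint T g = 0 := hg
  have hTg : ∀ x, ⟪g, T x⟫_ℂ = 0 * ⟪g, x⟫_ℂ := fun x => by
    rw [← ContinuousLinearMap.adjoint_inner_left, hg', inner_zero_left, zero_mul]
  have hAg : ∀ x, ⟪g, (T + rankOne f g) x⟫_ℂ = ⟪g, f⟫_ℂ * ⟪g, x⟫_ℂ := fun x => by
    rw [add_apply, inner_add_right, hTg, rankOne_apply, inner_smul_right, zero_mul, zero_add,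
      mul_comm]
  have h0 : 0 ∉ leftSpectrum T := by simpa [leftSpectrum] using hlinv
  have hsub : leftSpectrum T ⊆ leftSpectrum (T + rankOne f g) := fun l hl =>
    mem_leftSpectrum_add_rankOne hTg (by rintro rfl; exact h0 hl) f hl
  refine ⟨hsub, Set.Subset.antisymm ?_ (Set.sdiff_subset_sdiff_left hsub), ?_⟩
  · rintro l ⟨hl, hlα⟩
    refine ⟨?_, hlα⟩
    simpa [rankOne_neg_left] using mem_leftSpectrum_add_rankOne hAg hlα (-f) hl
  · refine spectralRadius_add_eq_max ?_ (rankOne_mul_self f g) inner_eq_zero_of_rankOne_eq_zero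
    rw [rankOne_mul, hg', rankOne_zero_right]

theorem left_spectrum_rankOne_perturbation
    {H : Type*} [NormedAddCommGroup H] [InnerProductSpace ℂ H] [CompleteSpace H]
    [Nontrivial H] (T : H →L[ℂ] H)
    (hcyc : ∃ ξ : H, Dense (Submodule.span ℂ (Set.range fun n : ℕ => (T ^ n) ξ) : Set H))
    (hana : (⋂ n : ℕ, Set.range ⇑(T ^ n)) = {0})
    (hlinv : ∃ L : H →L[ℂ] H, L ∘L T = 1)
    (f g : H) (hg : g ∈ LinearMap.ker (ContinuousLinearMap.adjoint T : H →ₗ[ℂ] H)) :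
    leftSpectrum T ⊆ leftSpectrum (T + rankOne f g) ∧
    leftSpectrum (T + rankOne f g) \ {⟪g, f⟫_ℂ} = leftSpectrum T \ {⟪g, f⟫_ℂ} ∧
    spectralRadius ℂ (T + rankOne f g) =
      max (spectralRadius ℂ T) (‖⟪g, f⟫_ℂ‖₊ : ENNReal) :=
  left_spectrum_rankOne_perturbation_general T hlinv f g hg
end

section
/- Let T be a left invertible bounded linear operator on a complex Hilbert space H, let f ∈ ker T* with ‖f‖ = 1, and let g ∈ H. Then S = T + f⊗g is left invertible and its Cauchy dual satisfies S' = T' + (1 + ‖T'g‖²)^{-1} (f − T'g) ⊗ ((T*T)^{-1} g), where T' = T(T*T)^{-1} is the Cauchy dual of T. -/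
open scoped InnerProductSpace

/-- The Cauchy dual `T' = T (T*T)⁻¹` of a left invertible operator `T`, where the
inverse is taken in the sense of `Ring.inverse` (which is the genuine inverse since
`T*T` is invertible when `T` is left invertible). -/
noncomputable def cauchyDual {H : Type*} [NormedAddCommGroup H] [InnerProductSpace ℂ H]
    [CompleteSpace H] (T : H →L[ℂ] H) : H →L[ℂ] H :=
  T ∘L Ring.inverse (ContinuousLinearMap.adjoint T ∘L T)

open scoped NNReal
open ContinuousLinearMap

local notation "⟪" x ", " y "⟫" => @inner ℂ _ _ x y

lemma rankOne_apply_s18 {H : Type*} [NormedAddCommGroup H] [InnerProductSpace ℂ H]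
    (f g h : H) : rankOne f g h = ⟪g, h⟫ • f := rfl

lemma cauchyDual_apply {H : Type*} [NormedAddCommGroup H] [InnerProductSpace ℂ H]
    [CompleteSpace H] (T : H →L[ℂ] H) (x : H) :
    cauchyDual T x = T (Ring.inverse (ContinuousLinearMap.adjoint T ∘L T) x) := rfl

lemma myIsUnit {H : Type*} [NormedAddCommGroup H] [InnerProductSpace ℂ H] [CompleteSpace H]
    (A : H →L[ℂ] H) (hsa : ContinuousLinearMap.adjoint A = A) (C : ℝ≥0)
    (hb : ∀ x, ‖x‖ ≤ (C : ℝ) * ‖A x‖) : IsUnit A := by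
  have hker : LinearMap.ker (A : H →ₗ[ℂ] H) = ⊥ := by
    rw [LinearMap.ker_eq_bot']
    intro x hx
    rw [ContinuousLinearMap.coe_coe] at hx
    have := hb x
    rw [hx] at this
    simp at this
    have : ‖x‖ ≤ 0 := by simpa using this
    simpa using le_antisymm this (norm_nonneg x)
  have hclosed : IsClosed (Set.range A) :=
    (A.antilipschitz_of_bound hb).isClosed_range A.uniformContinuous
  haveI : CompleteSpace (LinearMap.range (A : H →ₗ[ℂ] H)) :=
    (show IsClosed ((LinearMap.range (A : H →ₗ[ℂ] H) : Submodule ℂ H) : Set H) from hclosed).completeSpace_coe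
  have horth : (LinearMap.range (A : H →ₗ[ℂ] H))ᗮ = ⊥ := by
    rw [Submodule.eq_bot_iff]
    intro y hy
    have h0 : ⟪A (A y), y⟫ = 0 := (Submodule.mem_orthogonal _ y).mp hy _ ⟨A y, rfl⟩
    have h1 : ⟪A (A y), y⟫ = ⟪A y, A y⟫ := by
      nth_rewrite 1 [← hsa]
      exact ContinuousLinearMap.adjoint_inner_left A y (A y)
    have hAy : A y = 0 := by
      rw [h1] at h0
      exact inner_self_eq_zero.mp h0
    have := hb y
    rw [hAy] at this
    simp at this
    exact le_antisymm (by simpa using this) (norm_nonneg y) |> norm_eq_zero.mp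
  have hrange : LinearMap.range (A : H →ₗ[ℂ] H) = ⊤ := Submodule.orthogonal_eq_bot_iff.mp horth
  let e := ContinuousLinearEquiv.ofBijective A hker hrange
  refine ⟨⟨A, (e.symm : H →L[ℂ] H), ?_, ?_⟩, rfl⟩
  · ext x
    simp [ContinuousLinearMap.mul_apply]
    exact e.apply_symm_apply x
  · ext x
    simp [ContinuousLinearMap.mul_apply]
    exact e.symm_apply_apply x

theorem cauchyDual_rankOne_perturbation
    {H : Type*} [NormedAddCommGroup H] [InnerProductSpace ℂ H] [CompleteSpace H]
    (T : H →L[ℂ] H) (hlinv : ∃ L : H →L[ℂ] H, L ∘L T = 1)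
    (f g : H) (hf : ContinuousLinearMap.adjoint T f = 0) (hf1 : ‖f‖ = 1) :
    (∃ L : H →L[ℂ] H, L ∘L (T + rankOne f g) = 1) ∧
    cauchyDual (T + rankOne f g) =
      cauchyDual T + (((1 + ‖cauchyDual T g‖ ^ 2 : ℝ) : ℂ))⁻¹ •
        rankOne (f - cauchyDual T g)
          (Ring.inverse (ContinuousLinearMap.adjoint T ∘L T) g) := by
  obtain ⟨L, hL⟩ := hlinv
  set A : H →L[ℂ] H := ContinuousLinearMap.adjoint T ∘L T with hA
  -- A is self-adjoint
  have hAsa : ContinuousLinearMap.adjoint A = A := by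
    rw [hA, adjoint_comp, adjoint_adjoint]
  have hAsym : ∀ x y : H, ⟪A x, y⟫ = ⟪x, A y⟫ := by
    intro x y
    nth_rewrite 1 [← hAsa]
    exact adjoint_inner_left A y x
  have hTT : ∀ x y : H, ⟪A x, y⟫ = ⟪T x, T y⟫ := by
    intro x y
    rw [hA]
    calc ⟪(ContinuousLinearMap.adjoint T ∘L T) x, y⟫
        = ⟪ContinuousLinearMap.adjoint T (T x), y⟫ := rfl
      _ = ⟪T x, T y⟫ := adjoint_inner_left T y (T x)
  -- bound
  have hbT : ∀ x : H, ‖x‖ ≤ ‖L‖ * ‖T x‖ := by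
    intro x
    calc ‖x‖ = ‖L (T x)‖ := by
          have : L (T x) = (L ∘L T) x := rfl
          rw [this, hL]; rfl
      _ ≤ ‖L‖ * ‖T x‖ := L.le_opNorm _
  have hbA : ∀ x : H, ‖x‖ ≤ ((‖L‖₊ * ‖L‖₊ : ℝ≥0) : ℝ) * ‖A x‖ := by
    intro x
    have h2 : ‖T x‖ ^ 2 ≤ ‖A x‖ * ‖x‖ := by
      have : ⟪T x, T x⟫ = ⟪A x, x⟫ := (hTT x x).symm
      have hre : ‖T x‖ ^ 2 = Complex.re ⟪A x, x⟫ := by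
        rw [← this]
        exact (inner_self_eq_norm_sq (𝕜 := ℂ) (T x)).symm
      calc ‖T x‖ ^ 2 = Complex.re ⟪A x, x⟫ := hre
        _ ≤ ‖(⟪A x, x⟫ : ℂ)‖ := Complex.re_le_norm _
        _ ≤ ‖A x‖ * ‖x‖ := norm_inner_le_norm _ _
    have hcast : ((‖L‖₊ * ‖L‖₊ : ℝ≥0) : ℝ) = ‖L‖ * ‖L‖ := by push_cast; rfl
    rw [hcast]
    rcases eq_or_ne x 0 with rfl | hx
    · simp
    · have hxpos : 0 < ‖x‖ := norm_pos_iff.mpr hx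
      nlinarith [hbT x, norm_nonneg (T x), norm_nonneg (A x), norm_nonneg L,
        mul_le_mul (hbT x) (hbT x) (norm_nonneg x) (by positivity)]
  have hAu : IsUnit A := myIsUnit A hAsa _ hbA
  set Ai : H →L[ℂ] H := Ring.inverse A with hAidef
  have hAAi : ∀ x : H, A (Ai x) = x := by
    intro x
    have : A * Ai = 1 := Ring.mul_inverse_cancel A hAu
    calc A (Ai x) = (A * Ai) x := rfl
      _ = x := by rw [this]; rfl
  have hAiA : ∀ x : H, Ai (A x) = x := by
    intro x
    have : Ai * A = 1 := Ring.inverse_mul_cancel A hAu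
    calc Ai (A x) = (Ai * A) x := rfl
      _ = x := by rw [this]; rfl
  have hAisym : ∀ x y : H, ⟪Ai x, y⟫ = ⟪x, Ai y⟫ := by
    intro x y
    calc ⟪Ai x, y⟫ = ⟪Ai x, A (Ai y)⟫ := by rw [hAAi]
      _ = ⟪A (Ai x), Ai y⟫ := (hAsym _ _).symm
      _ = ⟪x, Ai y⟫ := by rw [hAAi]
  set w : H := Ai g with hw
  have hAw : A w = g := hAAi g
  have hTfh : ∀ h : H, ⟪f, T h⟫ = 0 := by
    intro h
    rw [← adjoint_inner_left, hf, inner_zero_left]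
  have hff : ⟪f, f⟫ = 1 := by
    rw [inner_self_eq_norm_sq_to_K, hf1]; norm_num
  set t : ℂ := ((‖T w‖ ^ 2 : ℝ) : ℂ) with ht
  have hgw : ⟪g, w⟫ = t := by
    calc ⟪g, w⟫ = ⟪A w, w⟫ := by rw [hAw]
      _ = ⟪T w, T w⟫ := hTT w w
      _ = ((‖T w‖ : ℂ)) ^ 2 := inner_self_eq_norm_sq_to_K _
      _ = t := by rw [ht]; push_cast; ring
  have hwg : ⟪w, g⟫ = t := by
    calc ⟪w, g⟫ = ⟪w, A w⟫ := by rw [hAw]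
      _ = ⟪A w, w⟫ := (hAsym w w).symm
      _ = t := hgw.symm ▸ (by rw [hAw] : ⟪A w, w⟫ = ⟪g, w⟫) ▸ rfl
  -- the scalar c
  set c : ℂ := ((1 + ‖cauchyDual T g‖ ^ 2 : ℝ) : ℂ) with hc
  have hTwg : cauchyDual T g = T w := rfl
  have hct : c = 1 + t := by
    rw [hc, ht, hTwg]; push_cast; ring
  have hc0 : c ≠ 0 := by
    rw [hc]
    intro hcon
    have : (1 + ‖cauchyDual T g‖ ^ 2 : ℝ) = 0 := by exact_mod_cast hcon
    nlinarith [sq_nonneg ‖cauchyDual T g‖]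
  have h1t : (1 : ℂ) + t ≠ 0 := by rw [← hct]; exact hc0
  -- the perturbed operator
  set S : H →L[ℂ] H := T + rankOne f g with hS
  have hSadj : ContinuousLinearMap.adjoint S = ContinuousLinearMap.adjoint T + rankOne g f := by
    rw [hS, map_add]
    congr 1
    symm
    rw [eq_adjoint_iff]
    intro x y
    simp only [rankOne_apply_s18, inner_smul_left, inner_smul_right]
    rw [← inner_conj_symm x f]
    ring
  have hSS : ContinuousLinearMap.adjoint S ∘L S = A + rankOne g g := by
    ext h
    rw [hSadj]
    simp only [hSadj, hS, comp_apply, add_apply, map_add, rankOne_apply_s18, map_smul, hf, hTfh,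
      inner_smul_right, hff, mul_one, one_smul, smul_zero, add_zero, zero_add, zero_smul, hA]
  -- explicit inverse of S* S
  set B : H →L[ℂ] H := Ai - c⁻¹ • rankOne w w with hB
  have hBapp : ∀ h : H, B h = Ai h - c⁻¹ • ⟪w, h⟫ • w := by
    intro h; simp [hB, rankOne_apply_s18, smul_smul]
  have hgBh : ∀ h : H, ⟪g, B h⟫ = c⁻¹ * ⟪w, h⟫ := by
    intro h
    rw [hBapp]
    rw [inner_sub_right, inner_smul_right, inner_smul_right, ← hAisym g h, ← hw, hgw, hct]
    field_simp
    ring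
  have hwAh : ∀ h : H, ⟪w, A h⟫ = ⟪g, h⟫ := by
    intro h
    rw [← hAsym, hAw]
  have hBg : B g = c⁻¹ • w := by
    rw [hBapp, ← hw, hwg, hct]
    match_scalars
    field_simp
    ring
  have hSBcomp : (ContinuousLinearMap.adjoint S ∘L S) ∘L B = 1 := by
    rw [hSS]
    ext h
    simp only [comp_apply, add_apply, rankOne_apply_s18, one_apply]
    rw [hgBh, hBapp]
    simp only [map_sub, map_smul, hAAi, hAw]
    rw [hct, ContinuousLinearMap.one_apply]
    match_scalars
    · ring
    · field_simp
      ring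
  have hBScomp : B ∘L (ContinuousLinearMap.adjoint S ∘L S) = 1 := by
    rw [hSS]
    ext h
    simp only [comp_apply, add_apply, rankOne_apply_s18, one_apply, map_add, map_smul, hBg]
    rw [hBapp (A h), hAiA, hwAh, hct, ContinuousLinearMap.one_apply]
    match_scalars
    · ring
    · field_simp
      ring
  -- S* S is a unit with inverse B
  have hu : IsUnit (ContinuousLinearMap.adjoint S ∘L S) :=
    ⟨⟨ContinuousLinearMap.adjoint S ∘L S, B, hSBcomp, hBScomp⟩, rfl⟩
  have hRinv : Ring.inverse (ContinuousLinearMap.adjoint S ∘L S) = B := by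
    have := Ring.inverse_unit (⟨ContinuousLinearMap.adjoint S ∘L S, B, hSBcomp, hBScomp⟩ :
      (H →L[ℂ] H)ˣ)
    simpa using this
  constructor
  · exact ⟨B ∘L ContinuousLinearMap.adjoint S, by rw [comp_assoc]; exact hBScomp⟩
  · have hcd : cauchyDual S = S ∘L B := by
      ext x
      rw [cauchyDual_apply, hRinv]
      rfl
    rw [hcd]
    ext h
    simp only [comp_apply, add_apply, smul_apply, rankOne_apply_s18]
    rw [hS]
    simp only [add_apply, rankOne_apply_s18]
    rw [hgBh, hBapp]
    simp only [map_sub, map_smul]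
    simp only [cauchyDual_apply, ← hA, ← hAidef, ← hw]
    module
end
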